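/- The convertibility pre-order induced by type-preserving noncontextual wirings on the set of non-disturbing n-cycle behaviors is not totally pre-ordered: there exist non-disturbing n-cycle behaviors B₁ and B₂ that are incomparable, i.e., neither B₁ → B₂ nor B₂ → B₁ holds. -/

import Mathlib

open Finset

/-- The outcome value `±1` encoded by a `Bool`. -/
def sval (b : Bool) : ℝ := if b then 1 else -1

/-- An `n`-cycle behavior: for each context `{X_i, X_{i+1}}` (`i ∈ ZMod n`) a
probability distribution `p i` on pairs of `±1` outcomes (encoded as `Bool`s). -/
def IsNCycleBehavior (n : ℕ) (p : ZMod n → Bool → Bool → ℝ) : Prop :=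
  (∀ i a b, 0 ≤ p i a b) ∧ ∀ i : ZMod n, ∑ a : Bool, ∑ b : Bool, p i a b = 1

/-- Non-disturbance: for all `i` and `b`, `Σ_a p_i(a,b) = Σ_c p_{i+1}(b,c)`. -/
def NCycleNonDisturbing (n : ℕ) (p : ZMod n → Bool → Bool → ℝ) : Prop :=
  ∀ (i : ZMod n) (b : Bool), ∑ a : Bool, p i a b = ∑ c : Bool, p (i + 1) b c

/-- Noncontextuality: existence of a global probability distribution `q` on
`ZMod n → Bool` whose marginals reproduce all the `p i`. -/
def NCycleNoncontextual (n : ℕ) [NeZero n] (p : ZMod n → Bool → Bool → ℝ) : Prop :=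
  ∃ q : (ZMod n → Bool) → ℝ, (∀ x, 0 ≤ q x) ∧ (∑ x : ZMod n → Bool, q x = 1) ∧
    ∀ (i : ZMod n) (a b : Bool),
      p i a b = ∑ x : ZMod n → Bool, (if x i = a ∧ x (i + 1) = b then q x else 0)

/-- A sign vector: `γ : ZMod n → {-1, 1}` with an odd number of entries equal to `-1`. -/
def IsSignVector (n : ℕ) (γ : ZMod n → ℝ) : Prop :=
  (∀ i, γ i = 1 ∨ γ i = -1) ∧ ∃ S : Finset (ZMod n), Odd S.card ∧ ∀ i, γ i = -1 ↔ i ∈ S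

/-- The noncontextuality functional `Ω_γ(p) = Σ_i γ(i) ⟨X_i X_{i+1}⟩_p`, where
`⟨X_i X_{i+1}⟩_p = Σ_{a,b} a·b·p_i(a,b)`. -/
noncomputable def OmegaNC (n : ℕ) [NeZero n] (γ : ZMod n → ℝ)
    (p : ZMod n → Bool → Bool → ℝ) : ℝ :=
  ∑ i : ZMod n, γ i * ∑ a : Bool, ∑ b : Bool, sval a * sval b * p i a b

/-- A type-preserving noncontextual wiring on the `n`-cycle scenario: a finite set `Λ`
(of natural numbers) with a probability distribution `ρ`; a finite set `R` with
pre-processing distributions `q j (·|λ)` on `R`; a context-selection map `g`; and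
post-processing distributions `m j (·|r, s, λ)` on `{-1,1}` (encoded as `Bool`). -/
structure NCWiring (n : ℕ) where
  Λ : Finset ℕ
  ρ : ℕ → ℝ
  ρ_nonneg : ∀ l ∈ Λ, 0 ≤ ρ l
  ρ_sum : ∑ l ∈ Λ, ρ l = 1
  R : Finset ℕ
  q : ZMod n → ℕ → ℕ → ℝ
  q_nonneg : ∀ j l r, 0 ≤ q j l r
  q_sum : ∀ j : ZMod n, ∀ l ∈ Λ, ∑ r ∈ R, q j l r = 1
  g : ZMod n → ℕ → ℕ → ZMod n
  m : ZMod n → ℕ → Bool → ℕ → Bool → ℝ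
  m_nonneg : ∀ j r s l t, 0 ≤ m j r s l t
  m_sum : ∀ j r s l, ∑ t : Bool, m j r s l t = 1

/-- The action of a noncontextual wiring on a behavior:
`(W(B))_i(t,t') = Σ_λ ρ(λ) Σ_{r,r'} q_i(r|λ) q_{i+1}(r'|λ)
  Σ_{s,s'} p_{g(i,r,r')}(s,s') m_i(t|r,s,λ) m_{i+1}(t'|r',s',λ)`. -/
def NCWiring.apply {n : ℕ} (W : NCWiring n) (p : ZMod n → Bool → Bool → ℝ) :
    ZMod n → Bool → Bool → ℝ :=
  fun i t t' => ∑ l ∈ W.Λ, W.ρ l * ∑ r ∈ W.R, ∑ r' ∈ W.R,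
    W.q i l r * W.q (i + 1) l r' * ∑ s : Bool, ∑ s' : Bool,
      p (W.g i r r') s s' * W.m i r s l t * W.m (i + 1) r' s' l t'

/-- A wiring is deterministic when every pre-processing distribution `q j (·|λ)` and
every post-processing distribution `m j (·|r,s,λ)` is a point mass. -/
def NCWiring.IsDeterministic {n : ℕ} (W : NCWiring n) : Prop :=
  (∀ j : ZMod n, ∀ l ∈ W.Λ, ∃ r₀ ∈ W.R, ∀ r ∈ W.R, W.q j l r = if r = r₀ then 1 else 0) ∧
  (∀ (j : ZMod n) (r : ℕ) (s : Bool) (l : ℕ),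
    ∃ t₀ : Bool, ∀ t : Bool, W.m j r s l t = if t = t₀ then 1 else 0)

/-- `B → B'`: some type-preserving noncontextual wiring maps `B` to `B'`. -/
def NCConvertsTo (n : ℕ) (B B' : ZMod n → Bool → Bool → ℝ) : Prop :=
  ∃ W : NCWiring n, W.apply B = B'

/-- The PR-like behavior for a sign vector `γ`: `(B_PR)_i(a,b) = (1 + γ(i)·a·b)/4`. -/
noncomputable def BPR (n : ℕ) (γ : ZMod n → ℝ) : ZMod n → Bool → Bool → ℝ :=
  fun i a b => (1 + γ i * sval a * sval b) / 4

/-- The noisy-PR behavior `B_NPR = ((n-2)/n)·B_PR + (2/n)·B_∅`, where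
`B_∅` is the maximally mixed behavior with all probabilities `1/4`. -/
noncomputable def BNPR (n : ℕ) (γ : ZMod n → ℝ) : ZMod n → Bool → Bool → ℝ :=
  fun i a b => (((n : ℝ) - 2) / (n : ℝ)) * BPR n γ i a b + (2 / (n : ℝ)) * (1 / 4)

/-- The interpolating family `F(α) = α·B_PR + (1-α)·B_NPR`. -/
noncomputable def Fmix (n : ℕ) (γ : ZMod n → ℝ) (α : ℝ) : ZMod n → Bool → Bool → ℝ :=
  fun i a b => α * BPR n γ i a b + (1 - α) * BNPR n γ i a b


/-!
A noncontextual wiring acts, for each value `λ` of its shared randomness, by letting every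
site `j` independently draw a context label `r` from `q j (·|λ)` and a deterministic response
`τ : Bool → Bool`, with `τ s` drawn from `m j (·|r, s, λ)` independently for both inputs `s`.
As the two sites `i`, `i + 1` of an edge are distinct (`n ≥ 2`), the payoff of any functional
`Σ_i Σ_{a,b} V_i(a,b) W(B)_i(a,b)` is an average of the payoffs of deterministic strategies
`(k, τ)`, where edge `i` reads context `k i` of `B` and site `j` answers by `τ j`.

Take `γ` with a single `-1`, `B₁ = F(1/2) = ((n-1)/n)·B_PR + (1/n)·B_∅` and
`B₂ = ¼·B_PR + ¾·δ_{(+1,+1)}`. For `Ω_γ` itself, `B₁` scores `n - 1`, while a deterministic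
strategy applied to `B₂` scores at most `n/4 + ¾(n - 2)`: on the `δ` part the outputs are
fixed signs `x_j`, and `Σ γ_i x_i x_{i+1} ≤ n - 2` because `∏ γ_i = -1`. For
`Ω_γ + (1/n) Σ_i ⟨X_i⟩`, `B₂` scores `n - 3/4`, while a deterministic strategy applied to `B₁`
scores at most `n - 1`: if every site answers by a constant, the parity bound applies again;
if every site passes its input on (possibly negated), each edge sees correlation at most
`(n-1)/n`; otherwise there are at least two edges joining the two kinds of sites, and these
contribute nothing.
-/

namespace Finset

theorem sum_piFinset_prod_mul_apply₂ {ι α : Type*} [Fintype ι] [DecidableEq ι] [DecidableEq α]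
    {s : Finset α} {q : ι → α → ℝ} (hq : ∀ j, ∑ x ∈ s, q j x = 1) {i₁ i₂ : ι} (h : i₁ ≠ i₂)
    (T : α → α → ℝ) :
    ∑ f ∈ Fintype.piFinset (fun _ ↦ s), (∏ j, q j (f j)) * T (f i₁) (f i₂) =
      ∑ x ∈ s, ∑ y ∈ s, q i₁ x * q i₂ y * T x y := by
  -- the indicator of `f i₁ = x ∧ f i₂ = y` is a product over the coordinates
  set e : α → α → ι → α → ℝ := fun x y j z ↦
    (if j = i₁ then if z = x then 1 else 0 else 1) * (if j = i₂ then if z = y then 1 else 0 else 1)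
  have he : ∀ x y (f : ι → α), ∏ j, e x y j (f j) = if f i₁ = x ∧ f i₂ = y then 1 else 0 := by
    intro x y f
    simp only [e, prod_mul_distrib, prod_ite_eq', mem_univ, if_true, ite_and]
    split_ifs <;> simp
  have hmarg : ∀ x ∈ s, ∀ y ∈ s,
      ∑ f ∈ Fintype.piFinset (fun _ ↦ s), ∏ j, q j (f j) * e x y j (f j) = q i₁ x * q i₂ y := by
    intro x hx y hy
    rw [sum_prod_piFinset s (fun j z ↦ q j z * e x y j z)]
    have hfactor : ∀ j, ∑ z ∈ s, q j z * e x y j z =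
        (if j = i₁ then q i₁ x else 1) * (if j = i₂ then q i₂ y else 1) := by
      intro j
      by_cases h₁ : j = i₁ <;> by_cases h₂ : j = i₂ <;> subst_vars <;> simp_all [e]
    simp only [hfactor, prod_mul_distrib, prod_ite_eq', mem_univ, if_true]
  calc ∑ f ∈ Fintype.piFinset (fun _ ↦ s), (∏ j, q j (f j)) * T (f i₁) (f i₂)
      = ∑ f ∈ Fintype.piFinset (fun _ ↦ s), ∑ x ∈ s, ∑ y ∈ s,
          (∏ j, q j (f j) * e x y j (f j)) * T x y := by
        refine sum_congr rfl fun f hf ↦ ?_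
        simp [prod_mul_distrib, he, ite_and, Fintype.mem_piFinset.mp hf]
    _ = ∑ x ∈ s, ∑ y ∈ s, q i₁ x * q i₂ y * T x y := by
        rw [sum_comm]
        refine sum_congr rfl fun x hx ↦ ?_
        rw [sum_comm]
        refine sum_congr rfl fun y hy ↦ ?_
        rw [← sum_mul, hmarg x hx y hy]

theorem sum_mul_le_of_sum_eq_one {α : Type*} {s : Finset α} {w v : α → ℝ} {c : ℝ}
    (hw : ∀ a ∈ s, 0 ≤ w a) (hsum : ∑ a ∈ s, w a = 1) (hv : ∀ a ∈ s, v a ≤ c) :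
    ∑ a ∈ s, w a * v a ≤ c :=
  calc ∑ a ∈ s, w a * v a ≤ ∑ a ∈ s, w a * c :=
        sum_le_sum fun a ha ↦ mul_le_mul_of_nonneg_left (hv a ha) (hw a ha)
    _ = c := by rw [← sum_mul, hsum, one_mul]

end Finset

namespace ZMod

variable {n : ℕ} [NeZero n]

theorem sum_le_sub_two_of_prod_eq_neg_one {s : ZMod n → ℝ} (hs : ∀ i, s i = 1 ∨ s i = -1)
    (hprod : ∏ i, s i = -1) : ∑ i, s i ≤ n - 2 := by
  obtain ⟨i₀, hi₀⟩ : ∃ i₀, s i₀ = -1 := by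
    by_contra! h
    norm_num [fun i ↦ (hs i).resolve_right (h i)] at hprod
  calc ∑ i, s i = s i₀ + ∑ i ∈ Finset.univ.erase i₀, s i :=
        (Finset.add_sum_erase _ _ (Finset.mem_univ i₀)).symm
    _ ≤ -1 + ∑ i ∈ Finset.univ.erase i₀, 1 := by
        rw [hi₀]
        gcongr with i
        rcases hs i with h | h <;> linarith
    _ = n - 2 := by
        rw [Finset.sum_const, Finset.card_erase_of_mem (Finset.mem_univ i₀), Finset.card_univ,
          ZMod.card, nsmul_one, Nat.cast_pred (Nat.pos_of_neZero n)]
        ring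

theorem eq_of_forall_apply_add_one {β : Type*} {f : ZMod n → β} (h : ∀ i, f (i + 1) = f i)
    (a b : ZMod n) : f a = f b := by
  have hcast : ∀ m : ℕ, f m = f 0 := by
    intro m
    induction m with
    | zero => simp
    | succ m ih => rw [Nat.cast_succ, h, ih]
  rw [← ZMod.natCast_zmod_val a, ← ZMod.natCast_zmod_val b, hcast, hcast]

theorem two_le_sum_abs_sub {χ : ZMod n → ℝ} (hχ : ∀ j, χ j = 0 ∨ χ j = 1) {j₀ j₁ : ZMod n}
    (h₀ : χ j₀ = 0) (h₁ : χ j₁ = 1) :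
    2 ≤ ∑ i, |χ (i + 1) - χ i| := by
  obtain ⟨i₀, hi₀⟩ : ∃ i₀, χ (i₀ + 1) - χ i₀ ≠ 0 := by
    by_contra! h
    have := eq_of_forall_apply_add_one (fun i ↦ sub_eq_zero.mp (h i)) j₀ j₁
    linarith
  have hjump : |χ (i₀ + 1) - χ i₀| = 1 := by
    rcases hχ (i₀ + 1) with h | h <;> rcases hχ i₀ with h' | h' <;> simp_all
  -- the increments telescope to zero, so the remaining ones compensate the jump at `i₀`
  have htel : ∑ i, (χ (i + 1) - χ i) = 0 := by
    rw [Finset.sum_sub_distrib, sub_eq_zero]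
    exact Equiv.sum_comp (Equiv.addRight 1) χ
  rw [← Finset.add_sum_erase _ _ (Finset.mem_univ i₀)] at htel ⊢
  have hrest : 1 ≤ ∑ i ∈ Finset.univ.erase i₀, |χ (i + 1) - χ i| :=
    calc (1 : ℝ) = |∑ i ∈ Finset.univ.erase i₀, (χ (i + 1) - χ i)| := by
          rw [eq_neg_of_add_eq_zero_right htel, abs_neg, hjump]
      _ ≤ _ := Finset.abs_sum_le_sum_abs _ _
  linarith

end ZMod

theorem sum_prod_mul_apply_bool {m : Bool → Bool → ℝ} (hm : ∀ s, ∑ t, m s t = 1) (s₀ : Bool)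
    (h : Bool → ℝ) :
    ∑ τ : Bool → Bool, (∏ s, m s (τ s)) * h (τ s₀) = ∑ t, m s₀ t * h t := by
  have := Finset.sum_piFinset_prod_mul_apply₂ (s := Finset.univ) (fun s ↦ hm s)
    (Bool.not_ne_self s₀).symm (fun x _ ↦ h x)
  rw [Fintype.piFinset_univ] at this
  simp_rw [this, mul_right_comm _ _ (h _), ← Finset.mul_sum, hm, mul_one]

theorem sum_prod_mul_prod_mul_apply_bool {m₁ m₂ : Bool → Bool → ℝ}
    (hm₁ : ∀ s, ∑ t, m₁ s t = 1) (hm₂ : ∀ s, ∑ t, m₂ s t = 1) (P V : Bool → Bool → ℝ) :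
    ∑ τ₁ : Bool → Bool, ∑ τ₂ : Bool → Bool, (∏ s, m₁ s (τ₁ s)) * (∏ s, m₂ s (τ₂ s)) *
        ∑ s, ∑ s', P s s' * V (τ₁ s) (τ₂ s') =
      ∑ a, ∑ b, V a b * ∑ s, ∑ s', P s s' * m₁ s a * m₂ s' b :=
  calc _ = ∑ s, ∑ s', P s s' * ∑ τ₁ : Bool → Bool, (∏ s, m₁ s (τ₁ s)) *
          ∑ τ₂ : Bool → Bool, (∏ s, m₂ s (τ₂ s)) * V (τ₁ s) (τ₂ s') := by
        simp only [Finset.mul_sum]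
        simp_rw [Finset.sum_comm (s := (Finset.univ : Finset (Bool → Bool)))
          (t := (Finset.univ : Finset Bool))]
        ac_rfl
    _ = ∑ s, ∑ s', P s s' * ∑ a, m₁ s a * ∑ b, m₂ s' b * V a b := by
        refine Finset.sum_congr rfl fun s _ ↦ Finset.sum_congr rfl fun s' _ ↦ ?_
        simp only [sum_prod_mul_apply_bool hm₂]
        rw [sum_prod_mul_apply_bool hm₁ s fun a ↦ ∑ b, m₂ s' b * V a b]
    _ = _ := by
        simp only [Fintype.sum_bool]
        ring

section Payoff

variable {n : ℕ} [NeZero n]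

noncomputable def payoff (V B : ZMod n → Bool → Bool → ℝ) : ℝ :=
  ∑ i, ∑ a, ∑ b, V i a b * B i a b

noncomputable def deterministicPayoff (V p : ZMod n → Bool → Bool → ℝ) (k : ZMod n → ZMod n)
    (τ : ZMod n → Bool → Bool) : ℝ :=
  ∑ i, ∑ s, ∑ s', p (k i) s s' * V i (τ i s) (τ (i + 1) s')

end Payoff

namespace NCWiring

variable {n : ℕ} (W : NCWiring n)

noncomputable def localWeight (l : ℕ) (j : ZMod n) (x : ℕ × (Bool → Bool)) : ℝ :=
  W.q j l x.1 * ∏ s, W.m j x.1 s l (x.2 s)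

theorem localWeight_nonneg (l : ℕ) (j : ZMod n) (x : ℕ × (Bool → Bool)) :
    0 ≤ W.localWeight l j x :=
  mul_nonneg (W.q_nonneg _ _ _) (Finset.prod_nonneg fun _ _ ↦ W.m_nonneg _ _ _ _ _)

theorem sum_localWeight {l : ℕ} (hl : l ∈ W.Λ) (j : ZMod n) :
    ∑ x ∈ W.R ×ˢ Finset.univ, W.localWeight l j x = 1 := by
  simp only [localWeight, Finset.sum_product, ← Finset.mul_sum, ← Fintype.prod_sum, W.m_sum,
    Finset.prod_const_one, mul_one, W.q_sum j l hl]

theorem sum_localWeight_mul_localWeight (V p : ZMod n → Bool → Bool → ℝ) (l : ℕ)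
    (i : ZMod n) :
    ∑ x ∈ W.R ×ˢ Finset.univ, ∑ y ∈ W.R ×ˢ Finset.univ,
        W.localWeight l i x * W.localWeight l (i + 1) y *
          ∑ s, ∑ s', p (W.g i x.1 y.1) s s' * V i (x.2 s) (y.2 s') =
      ∑ r ∈ W.R, ∑ r' ∈ W.R, W.q i l r * W.q (i + 1) l r' * ∑ a, ∑ b, V i a b * ∑ s, ∑ s',
        p (W.g i r r') s s' * W.m i r s l a * W.m (i + 1) r' s' l b := by
  simp only [Finset.sum_product]
  simp_rw [Finset.sum_comm (s := (Finset.univ : Finset (Bool → Bool))) (t := W.R)]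
  refine Finset.sum_congr rfl fun r _ ↦ Finset.sum_congr rfl fun r' _ ↦ ?_
  rw [← sum_prod_mul_prod_mul_apply_bool (W.m_sum i r · l) (W.m_sum (i + 1) r' · l),
    Finset.mul_sum]
  simp only [localWeight, Finset.mul_sum]
  ac_rfl

theorem payoff_apply [NeZero n] (V p : ZMod n → Bool → Bool → ℝ) :
    payoff V (W.apply p) = ∑ l ∈ W.Λ, W.ρ l * ∑ i, ∑ r ∈ W.R, ∑ r' ∈ W.R,
      W.q i l r * W.q (i + 1) l r' * ∑ a, ∑ b, V i a b * ∑ s, ∑ s',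
        p (W.g i r r') s s' * W.m i r s l a * W.m (i + 1) r' s' l b := by
  simp only [payoff, apply, Finset.mul_sum]
  simp_rw [Finset.sum_comm (s := (Finset.univ : Finset Bool)) (t := W.Λ),
    Finset.sum_comm (s := (Finset.univ : Finset Bool)) (t := W.R)]
  rw [Finset.sum_comm]
  ac_rfl

theorem payoff_apply_le [NeZero n] (hn : 1 < n) (V p : ZMod n → Bool → Bool → ℝ) {c : ℝ}
    (h : ∀ k τ, deterministicPayoff V p k τ ≤ c) : payoff V (W.apply p) ≤ c := by
  have hne : ∀ i : ZMod n, i ≠ i + 1 := by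
    have : Fact (1 < n) := ⟨hn⟩
    simp
  rw [W.payoff_apply]
  refine Finset.sum_mul_le_of_sum_eq_one W.ρ_nonneg W.ρ_sum fun l hl ↦ ?_
  simp_rw [← W.sum_localWeight_mul_localWeight V p l]
  calc _ = ∑ i, ∑ f ∈ Fintype.piFinset fun _ ↦ W.R ×ˢ Finset.univ,
          (∏ j, W.localWeight l j (f j)) * ∑ s, ∑ s',
            p (W.g i (f i).1 (f (i + 1)).1) s s' * V i ((f i).2 s) ((f (i + 1)).2 s') :=
        Finset.sum_congr rfl fun i _ ↦ (Finset.sum_piFinset_prod_mul_apply₂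
          (W.sum_localWeight hl) (hne i) fun x y ↦ _).symm
    _ = ∑ f ∈ Fintype.piFinset fun _ ↦ W.R ×ˢ Finset.univ, (∏ j, W.localWeight l j (f j)) *
          deterministicPayoff V p (fun i ↦ W.g i (f i).1 (f (i + 1)).1) (fun j ↦ (f j).2) := by
        rw [Finset.sum_comm]
        simp only [deterministicPayoff, Finset.mul_sum]
    _ ≤ c := by
        refine Finset.sum_mul_le_of_sum_eq_one
          (fun f _ ↦ Finset.prod_nonneg fun j _ ↦ W.localWeight_nonneg l j (f j)) ?_
          fun f _ ↦ h _ _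
        simp [Finset.sum_prod_piFinset, W.sum_localWeight hl]

end NCWiring

theorem not_NCConvertsTo_of_deterministicPayoff_le {n : ℕ} [NeZero n] (hn : 1 < n)
    {V B B' : ZMod n → Bool → Bool → ℝ} {c : ℝ} (h : ∀ k τ, deterministicPayoff V B k τ ≤ c)
    (hlt : c < payoff V B') : ¬ NCConvertsTo n B B' := by
  rintro ⟨W, rfl⟩
  exact (W.payoff_apply_le hn V B h).not_gt hlt

theorem sval_mul_self (b : Bool) : sval b * sval b = 1 := by
  cases b <;> norm_num [sval]

theorem IsSignVector.prod_eq_neg_one {n : ℕ} [NeZero n] {γ : ZMod n → ℝ}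
    (hγ : IsSignVector n γ) : ∏ i, γ i = -1 := by
  obtain ⟨S, hodd, hS⟩ := hγ.2
  have : ∀ i, γ i = if i ∈ S then -1 else 1 := fun i ↦ by
    split_ifs with h
    · exact (hS i).mpr h
    · exact (hγ.1 i).resolve_right (mt (hS i).mp h)
  simp [this, Finset.prod_ite_mem, hodd.neg_one_pow]

theorem IsSignVector.sum_mul_sval_mul_sval_le {n : ℕ} [NeZero n] {γ : ZMod n → ℝ}
    (hγ : IsSignVector n γ) (b : ZMod n → Bool) :
    ∑ i, γ i * sval (b i) * sval (b (i + 1)) ≤ n - 2 := by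
  refine ZMod.sum_le_sub_two_of_prod_eq_neg_one (fun i ↦ ?_) ?_
  · rcases hγ.1 i with h | h <;> cases b i <;> cases b (i + 1) <;> norm_num [h, sval]
  · have hshift : ∏ i, sval (b (i + 1)) = ∏ i, sval (b i) :=
      Fintype.prod_equiv (Equiv.addRight 1) _ _ fun _ ↦ rfl
    rw [Finset.prod_mul_distrib, Finset.prod_mul_distrib, hγ.prod_eq_neg_one, hshift, mul_assoc,
      ← Finset.prod_mul_distrib]
    simp [sval_mul_self]

theorem sub_one_div_natCast_mem_Icc (n : ℕ) [NeZero n] : ((n : ℝ) - 1) / n ∈ Set.Icc 0 1 := by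
  have hn : (1 : ℝ) ≤ n := by simp [Nat.one_le_iff_ne_zero, NeZero.ne n]
  exact ⟨div_nonneg (by linarith) n.cast_nonneg, div_le_one_of_le₀ (by linarith) n.cast_nonneg⟩

section Witnesses

variable {n : ℕ} {γ : ZMod n → ℝ}

def cyclePayoff (γ : ZMod n → ℝ) (κ : ℝ) : ZMod n → Bool → Bool → ℝ :=
  fun i a b ↦ γ i * sval a * sval b + κ * sval a

noncomputable def BPRDet (n : ℕ) (γ : ZMod n → ℝ) : ZMod n → Bool → Bool → ℝ :=
  fun i a b ↦ BPR n γ i a b / 4 + 3 / 4 * if a && b then 1 else 0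

def constIndicator (τ : Bool → Bool) : ℝ := if τ true = τ false then 1 else 0

theorem Fmix_half_apply [NeZero n] (i : ZMod n) (a b : Bool) :
    Fmix n γ (1 / 2) i a b = (1 + (n - 1) / n * γ i * sval a * sval b) / 4 := by
  have : (n : ℝ) ≠ 0 := NeZero.ne _
  simp only [Fmix, BNPR, BPR]
  field_simp
  ring

theorem isNCycleBehavior_Fmix_half [NeZero n] (hγ : ∀ i, γ i = 1 ∨ γ i = -1) :
    IsNCycleBehavior n (Fmix n γ (1 / 2)) := by
  obtain ⟨hc₀, hc₁⟩ := sub_one_div_natCast_mem_Icc n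
  refine ⟨fun i a b ↦ ?_, fun i ↦ ?_⟩
  · rw [Fmix_half_apply]
    rcases hγ i with h | h <;> cases a <;> cases b <;> norm_num [h, sval] <;> linarith
  · simp only [Fmix_half_apply, Fintype.sum_bool, sval]
    norm_num
    ring

theorem ncycleNonDisturbing_Fmix_half [NeZero n] : NCycleNonDisturbing n (Fmix n γ (1 / 2)) := by
  intro i b
  cases b <;> simp only [Fmix_half_apply, Fintype.sum_bool, sval] <;> norm_num <;> ring

theorem isNCycleBehavior_BPRDet (hγ : ∀ i, γ i = 1 ∨ γ i = -1) :
    IsNCycleBehavior n (BPRDet n γ) := by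
  refine ⟨fun i a b ↦ ?_, fun i ↦ ?_⟩
  · rcases hγ i with h | h <;> cases a <;> cases b <;> norm_num [BPRDet, BPR, h, sval]
  · simp only [BPRDet, BPR, Fintype.sum_bool, sval]
    norm_num
    ring

theorem ncycleNonDisturbing_BPRDet : NCycleNonDisturbing n (BPRDet n γ) := by
  intro i b
  cases b <;> simp only [BPRDet, BPR, Fintype.sum_bool, sval] <;> norm_num <;> ring

theorem payoff_Fmix_half [NeZero n] (hγ : ∀ i, γ i = 1 ∨ γ i = -1) :
    payoff (cyclePayoff γ 0) (Fmix n γ (1 / 2)) = n - 1 := by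
  have hn : (n : ℝ) ≠ 0 := NeZero.ne _
  have hedge : ∀ i, ∑ a, ∑ b, cyclePayoff γ 0 i a b * Fmix n γ (1 / 2) i a b = (n - 1) / n :=
    fun i ↦ by
      simp only [cyclePayoff, Fmix_half_apply, Fintype.sum_bool, sval]
      rcases hγ i with h | h <;> norm_num [h] <;> ring
  simp only [payoff, hedge, Finset.sum_const, Finset.card_univ, ZMod.card, nsmul_eq_mul]
  field_simp

theorem payoff_BPRDet [NeZero n] (hγ : ∀ i, γ i = 1 ∨ γ i = -1) :
    payoff (cyclePayoff γ (1 / n)) (BPRDet n γ) = n / 4 + 3 / 4 * ∑ i, γ i + 3 / 4 := by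
  have hn : (n : ℝ) ≠ 0 := NeZero.ne _
  have hedge : ∀ i, ∑ a, ∑ b, cyclePayoff γ (1 / n) i a b * BPRDet n γ i a b =
      1 / 4 + 3 / 4 * γ i + 3 / 4 * (1 / n) :=
    fun i ↦ by
      rcases hγ i with h | h <;> simp [cyclePayoff, BPRDet, BPR, sval, h] <;> ring
  simp only [payoff, hedge, Finset.sum_add_distrib, Finset.sum_const, Finset.card_univ,
    ZMod.card, nsmul_eq_mul, ← Finset.mul_sum]
  field_simp

theorem BPRDet_edge_le (hγ : ∀ i, γ i = 1 ∨ γ i = -1) (i j : ZMod n) (τ₁ τ₂ : Bool → Bool) :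
    ∑ s, ∑ s', BPRDet n γ j s s' * cyclePayoff γ 0 i (τ₁ s) (τ₂ s') ≤
      1 / 4 + 3 / 4 * (γ i * sval (τ₁ true) * sval (τ₂ true)) := by
  simp only [BPRDet, BPR, cyclePayoff, Fintype.sum_bool]
  rcases hγ i with hi | hi <;> rcases hγ j with hj | hj <;>
    cases τ₁ true <;> cases τ₁ false <;> cases τ₂ true <;> cases τ₂ false <;>
    norm_num [hi, hj, sval]

theorem BPRDet_deterministicPayoff_le [NeZero n] (hγ : IsSignVector n γ) (k : ZMod n → ZMod n)
    (τ : ZMod n → Bool → Bool) :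
    deterministicPayoff (cyclePayoff γ 0) (BPRDet n γ) k τ ≤ n - 3 / 2 :=
  calc _ ≤ ∑ i, (1 / 4 + 3 / 4 * (γ i * sval (τ i true) * sval (τ (i + 1) true))) :=
        Finset.sum_le_sum fun i _ ↦ BPRDet_edge_le hγ.1 i (k i) (τ i) (τ (i + 1))
    _ = n / 4 + 3 / 4 * ∑ i, γ i * sval (τ i true) * sval (τ (i + 1) true) := by
        simp [Finset.sum_add_distrib, Finset.mul_sum]
        ring
    _ ≤ n / 4 + 3 / 4 * (n - 2) := by
        have := hγ.sum_mul_sval_mul_sval_le (τ · true)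
        linarith
    _ = n - 3 / 2 := by ring

theorem Fmix_half_edge_le [NeZero n] (hγ : ∀ i, γ i = 1 ∨ γ i = -1) {κ : ℝ} (hκ : 0 ≤ κ)
    (i j : ZMod n) (τ₁ τ₂ : Bool → Bool) :
    ∑ s, ∑ s', Fmix n γ (1 / 2) j s s' * cyclePayoff γ κ i (τ₁ s) (τ₂ s') ≤
      constIndicator τ₁ * constIndicator τ₂ +
        (n - 1) / n * (1 - constIndicator τ₁) * (1 - constIndicator τ₂) +
        κ * constIndicator τ₁ := by
  obtain ⟨hc₀, hc₁⟩ := sub_one_div_natCast_mem_Icc n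
  simp only [Fmix_half_apply, cyclePayoff, constIndicator, Fintype.sum_bool]
  generalize ((n : ℝ) - 1) / n = c at hc₀ hc₁ ⊢
  rcases hγ i with hi | hi <;> rcases hγ j with hj | hj <;>
    cases τ₁ true <;> cases τ₁ false <;> cases τ₂ true <;> cases τ₂ false <;>
    norm_num [hi, hj, sval] <;> linarith

theorem Fmix_half_edge_of_const [NeZero n] (κ : ℝ) (i j : ZMod n) {τ₁ τ₂ : Bool → Bool}
    (h₁ : τ₁ true = τ₁ false) (h₂ : τ₂ true = τ₂ false) :
    ∑ s, ∑ s', Fmix n γ (1 / 2) j s s' * cyclePayoff γ κ i (τ₁ s) (τ₂ s') =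
      γ i * sval (τ₁ true) * sval (τ₂ true) + κ * sval (τ₁ true) := by
  simp only [Fmix_half_apply, cyclePayoff, Fintype.sum_bool, ← h₁, ← h₂]
  cases τ₁ true <;> cases τ₂ true <;> norm_num [sval] <;> ring

theorem Fmix_half_deterministicPayoff_le [NeZero n] (hγ : IsSignVector n γ)
    (k : ZMod n → ZMod n) (τ : ZMod n → Bool → Bool) :
    deterministicPayoff (cyclePayoff γ (1 / n)) (Fmix n γ (1 / 2)) k τ ≤ n - 1 := by
  have hn : (n : ℝ) ≠ 0 := NeZero.ne _
  have hsum_le_card : ∀ f : ZMod n → ℝ, (∀ i, f i ≤ 1) → ∑ i, f i ≤ n := fun f hf ↦ by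
    simpa using Finset.sum_le_card_nsmul Finset.univ f 1 fun i _ ↦ hf i
  by_cases hconst : ∀ j, τ j true = τ j false
  · calc _ = ∑ i, γ i * sval (τ i true) * sval (τ (i + 1) true) +
            1 / n * ∑ i, sval (τ i true) := by
          simp only [deterministicPayoff, Fmix_half_edge_of_const _ _ _ (hconst _) (hconst _),
            Finset.sum_add_distrib, Finset.mul_sum]
      _ ≤ n - 2 + 1 / n * n := by
          gcongr
          · exact hγ.sum_mul_sval_mul_sval_le (τ · true)
          · exact hsum_le_card _ fun i ↦ by cases τ i true <;> norm_num [sval]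
      _ = n - 1 := by field_simp; ring
  set χ : ZMod n → ℝ := fun j ↦ constIndicator (τ j) with hχ_def
  have hχ : ∀ j, χ j = 0 ∨ χ j = 1 := fun j ↦ by
    simp only [hχ_def, constIndicator]
    split_ifs <;> simp
  have hedge : ∀ i, ∑ s, ∑ s', Fmix n γ (1 / 2) (k i) s s' *
      cyclePayoff γ (1 / n) i (τ i s) (τ (i + 1) s') ≤
        χ i * χ (i + 1) + (n - 1) / n * (1 - χ i) * (1 - χ (i + 1)) + 1 / n * χ i :=
    fun i ↦ Fmix_half_edge_le hγ.1 (by positivity) i (k i) (τ i) (τ (i + 1))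
  by_cases hnone : ∀ j, χ j = 0
  · calc _ ≤ ∑ _i : ZMod n, ((n : ℝ) - 1) / n :=
          Finset.sum_le_sum fun i _ ↦ by simpa [hnone] using hedge i
      _ = n - 1 := by simp [Finset.card_univ, ZMod.card]; field_simp
  push Not at hconst hnone
  obtain ⟨j₀, hj₀⟩ := hconst
  obtain ⟨j₁, hj₁⟩ := hnone
  have hχ₀ : χ j₀ = 0 := by simp [hχ_def, constIndicator, hj₀]
  have hχ₁ : χ j₁ = 1 := (hχ j₁).resolve_left hj₁
  calc _ ≤ ∑ i, ((1 - |χ (i + 1) - χ i|) + 1 / n * χ i) := by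
        refine Finset.sum_le_sum fun i _ ↦ (hedge i).trans ?_
        have hc₁ := (sub_one_div_natCast_mem_Icc n).2
        rcases hχ i with h | h <;> rcases hχ (i + 1) with h' | h' <;> norm_num [h, h', hc₁]
    _ = n - ∑ i, |χ (i + 1) - χ i| + 1 / n * ∑ i, χ i := by
        simp [Finset.sum_add_distrib, Finset.sum_sub_distrib, Finset.mul_sum, ZMod.card]
    _ ≤ n - 2 + 1 / n * n := by
        gcongr
        · exact ZMod.two_le_sum_abs_sub hχ hχ₀ hχ₁
        · exact hsum_le_card _ fun i ↦ by rcases hχ i with h | h <;> simp [h]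
    _ = n - 1 := by field_simp; ring

end Witnesses

def singleFlip (n : ℕ) : ZMod n → ℝ := fun i ↦ if i = 0 then -1 else 1

theorem isSignVector_singleFlip (n : ℕ) : IsSignVector n (singleFlip n) :=
  ⟨fun i ↦ by by_cases h : i = 0 <;> simp [singleFlip, h],
    {0}, by simp, fun i ↦ by by_cases h : i = 0 <;> norm_num [singleFlip, h]⟩

theorem sum_singleFlip (n : ℕ) [NeZero n] : ∑ i, singleFlip n i = n - 2 := by
  have : ∀ i, singleFlip n i = 1 - if i = 0 then 2 else 0 := fun i ↦ by
    by_cases h : i = 0 <;> norm_num [singleFlip, h]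
  simp [this, Finset.sum_sub_distrib, ZMod.card]

/-- the convertibility pre-order induced by type-preserving
noncontextual wirings on non-disturbing `n`-cycle behaviors is not totally
pre-ordered: there exist incomparable non-disturbing behaviors `B₁`, `B₂`
(neither `B₁ → B₂` nor `B₂ → B₁`). -/
theorem preorder_not_total (n : ℕ) [NeZero n] (hn : 3 ≤ n) :
    ∃ B₁ B₂ : ZMod n → Bool → Bool → ℝ,
      IsNCycleBehavior n B₁ ∧ NCycleNonDisturbing n B₁ ∧
      IsNCycleBehavior n B₂ ∧ NCycleNonDisturbing n B₂ ∧
      ¬ NCConvertsTo n B₁ B₂ ∧ ¬ NCConvertsTo n B₂ B₁ := by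
  have hγ := isSignVector_singleFlip n
  have hn₁ : 1 < n := by omega
  refine ⟨Fmix n (singleFlip n) (1 / 2), BPRDet n (singleFlip n),
    isNCycleBehavior_Fmix_half hγ.1, ncycleNonDisturbing_Fmix_half,
    isNCycleBehavior_BPRDet hγ.1, ncycleNonDisturbing_BPRDet,
    not_NCConvertsTo_of_deterministicPayoff_le hn₁ (Fmix_half_deterministicPayoff_le hγ) ?_,
    not_NCConvertsTo_of_deterministicPayoff_le hn₁ (BPRDet_deterministicPayoff_le hγ) ?_⟩
  · rw [payoff_BPRDet hγ.1, sum_singleFlip]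
    linarith
  · rw [payoff_Fmix_half hγ.1]
    linarith
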